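/- arXiv:2602.17276 — 3 statements merged into one kernel-verified Lean document; each statement's English description precedes it below -/
import Mathlib

section
/- There exists a connected simple graph G on 16 vertices (with no loops or multiple edges) such that μ(G) > max over all vertices v of G of ( m(v)²/d(v) + m(v) ), where μ(G) is the Laplacian spectral radius of G, d(v) is the degree of v in G, and m(v) is the average degree of the neighbors of v in G. In other words, the conjectured upper bound μ(G) ≤ max_{v∈V(G)} ( m(v)²/d(v) + m(v) ) for nontrivial connected simple graphs fails for some connected graph of order 16. -/
open SimpleGraph Matrix

/-- The degree of a vertex (with classical decidability of adjacency). -/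
noncomputable def vertDeg {V : Type*} [Fintype V] (G : SimpleGraph V) (v : V) : ℕ :=
  letI : DecidableRel G.Adj := Classical.decRel _
  G.degree v

/-- The average degree of the neighbors of a vertex `v`:
`m(v) = (∑_{u ~ v} d(u)) / d(v)`. -/
noncomputable def avgNeighborDeg {V : Type*} [Fintype V] (G : SimpleGraph V) (v : V) : ℝ :=
  letI : DecidableRel G.Adj := Classical.decRel _
  (∑ u ∈ G.neighborFinset v, (G.degree u : ℝ)) / (G.degree v : ℝ)

/-- The Laplacian spectral radius of a graph: the largest eigenvalue of the
Laplacian matrix `L(G) = D(G) - A(G)`. -/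
noncomputable def lapSpectralRadius {V : Type*} [Fintype V] [DecidableEq V]
    (G : SimpleGraph V) : ℝ :=
  letI : DecidableRel G.Adj := Classical.decRel _
  ⨆ i, (SimpleGraph.posSemidef_lapMatrix ℝ G).isHermitian.eigenvalues i

/-!
For every vertex, `m(v)² / d(v) + m(v) = s (s + d²) / d³`, where `d = d(v)` and `s` is the sum of
the degrees of the neighbours of `v`; for a suitable graph with 16 vertices and 30 edges this is
at most `220 / 27` at every vertex, a finite check. On the other hand `μ(G)` is the largest eigenvalue of the symmetric
matrix `L(G)`, so `c • 1 - L(G)` is positive semidefinite for `c = μ(G)` and `μ(G)` bounds every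
Rayleigh quotient `xᵀ L(G) x / xᵀ x`. An integer test vector has Rayleigh quotient
`81457 / 9979 > 220 / 27`.
-/

open scoped ComplexOrder

namespace Matrix.IsHermitian

variable {n : Type*} [Fintype n] [DecidableEq n]

theorem posSemidef_smul_one_sub {𝕜 : Type*} [RCLike 𝕜] {A : Matrix n n 𝕜} (hA : A.IsHermitian)
    {c : ℝ} (hc : ∀ i, hA.eigenvalues i ≤ c) : ((c : 𝕜) • (1 : Matrix n n 𝕜) - A).PosSemidef := by
  have h : (c : 𝕜) • (1 : Matrix n n 𝕜) - A = Unitary.conjStarAlgAut 𝕜 _ hA.eigenvectorUnitary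
      (diagonal fun i ↦ ((c - hA.eigenvalues i : ℝ) : 𝕜)) := by
    conv_lhs => rw [hA.spectral_theorem]
    rw [← map_one (Unitary.conjStarAlgAut 𝕜 _ hA.eigenvectorUnitary), ← map_smul, ← map_sub]
    congr 1
    ext i j
    by_cases hij : i = j <;> simp [hij, Algebra.algebraMap_eq_smul_one, sub_smul]
  rw [h, Unitary.conjStarAlgAut_apply, _root_.Unitary.isUnit_coe.posSemidef_star_right_conjugate_iff,
    posSemidef_diagonal_iff]
  exact fun i ↦ RCLike.ofReal_nonneg.mpr (sub_nonneg.mpr (hc i))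

theorem dotProduct_mulVec_le_iSup_eigenvalues_mul {A : Matrix n n ℝ} (hA : A.IsHermitian)
    (x : n → ℝ) : x ⬝ᵥ (A *ᵥ x) ≤ (⨆ i, hA.eigenvalues i) * (x ⬝ᵥ x) := by
  have hpsd := hA.posSemidef_smul_one_sub fun i ↦
    le_ciSup (Set.finite_range hA.eigenvalues).bddAbove i
  simpa [sub_mulVec, dotProduct_sub, smul_mulVec] using hpsd.dotProduct_mulVec_nonneg x

end Matrix.IsHermitian

namespace SimpleGraph

variable {V : Type*} (G : SimpleGraph V)

theorem reachable_iterate {p : V → V} (hp : ∀ v, p v = v ∨ G.Adj v (p v)) (k : ℕ) (v : V) :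
    G.Reachable v (p^[k] v) := by
  induction k generalizing v with
  | zero => rfl
  | succ k ih =>
    rw [Function.iterate_succ_apply]
    refine Reachable.trans ?_ (ih (p v))
    rcases hp v with hv | hv
    · rw [hv]
    · exact hv.reachable

theorem connected_of_iterate_eq {p : V → V} (hp : ∀ v, p v = v ∨ G.Adj v (p v)) {r : V} {k : ℕ}
    (hr : ∀ v, p^[k] v = r) : G.Connected :=
  (connected_iff_exists_forall_reachable G).mpr ⟨r, fun v ↦ hr v ▸ (G.reachable_iterate hp k v).symm⟩

variable [Fintype V] [DecidableRel G.Adj]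

theorem map_lapMatrix {R S : Type*} [Ring R] [Ring S] [DecidableEq V] (f : R →+* S) :
    (G.lapMatrix R).map f = G.lapMatrix S := by
  ext i j
  by_cases hij : i = j <;> by_cases hadj : G.Adj i j <;>
    simp [lapMatrix, degMatrix, adjMatrix_apply, hij, hadj]

theorem map_dotProduct_lapMatrix_mulVec {R S : Type*} [Ring R] [Ring S] [DecidableEq V]
    (f : R →+* S) (x : V → R) :
    f (x ⬝ᵥ (G.lapMatrix R *ᵥ x)) = (f ∘ x) ⬝ᵥ (G.lapMatrix S *ᵥ (f ∘ x)) := by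
  rw [f.map_dotProduct, ← G.map_lapMatrix f]
  congr 1
  ext i
  exact f.map_mulVec _ x i

theorem le_lapSpectralRadius_mul [DecidableEq V] (x : V → ℝ) :
    x ⬝ᵥ (G.lapMatrix ℝ *ᵥ x) ≤ lapSpectralRadius G * (x ⬝ᵥ x) := by
  convert (G.posSemidef_lapMatrix ℝ).isHermitian.dotProduct_mulVec_le_iSup_eigenvalues_mul x
  unfold lapSpectralRadius
  congr!

theorem vertDeg_eq (v : V) : vertDeg G v = G.degree v := by
  unfold vertDeg
  congr!

theorem avgNeighborDeg_eq (v : V) :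
    avgNeighborDeg G v = (∑ u ∈ G.neighborFinset v, (G.degree u : ℝ)) / G.degree v := by
  unfold avgNeighborDeg
  congr!

theorem sq_avgNeighborDeg_div_vertDeg_add_eq (v : V) :
    avgNeighborDeg G v ^ 2 / vertDeg G v + avgNeighborDeg G v =
      (∑ u ∈ G.neighborFinset v, (G.degree u : ℝ)) *
        (∑ u ∈ G.neighborFinset v, (G.degree u : ℝ) + G.degree v ^ 2) / G.degree v ^ 3 := by
  rw [avgNeighborDeg_eq, vertDeg_eq]
  rcases eq_or_ne (G.degree v : ℝ) 0 with hd | hd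
  · simp [hd]
  · field_simp

theorem sq_avgNeighborDeg_div_vertDeg_add_le {a b : ℕ} (hb : 0 < b) (v : V)
    (h : b * ((∑ u ∈ G.neighborFinset v, G.degree u) *
      (∑ u ∈ G.neighborFinset v, G.degree u + G.degree v ^ 2)) ≤ a * G.degree v ^ 3) :
    avgNeighborDeg G v ^ 2 / vertDeg G v + avgNeighborDeg G v ≤ a / b := by
  rw [sq_avgNeighborDeg_div_vertDeg_add_eq]
  rcases (G.degree v).eq_zero_or_pos with hd | hd
  · simp [hd]
    positivity
  · rw [div_le_div_iff₀ (by positivity) (by positivity), mul_comm]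
    exact_mod_cast h

end SimpleGraph

namespace Counterexample16

def edges : List (Fin 16 × Fin 16) :=
  [(0, 2), (0, 8), (0, 14), (0, 15), (1, 9), (1, 12), (1, 13), (1, 15), (2, 6), (2, 7), (2, 11),
    (3, 5), (3, 10), (3, 13), (4, 5), (4, 8), (4, 12), (4, 15), (5, 14), (6, 9), (6, 14), (7, 9),
    (7, 13), (7, 15), (8, 10), (8, 11), (10, 12), (11, 12), (11, 13), (11, 15)]

def graph : SimpleGraph (Fin 16) := SimpleGraph.fromRel fun i j ↦ (i, j) ∈ edges

instance : DecidableRel graph.Adj := fun i j ↦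
  inferInstanceAs (Decidable (i ≠ j ∧ ((i, j) ∈ edges ∨ (j, i) ∈ edges)))

def bfsParent : Fin 16 → Fin 16 := ![0, 15, 0, 5, 8, 14, 2, 2, 0, 6, 8, 2, 11, 7, 0, 0]

theorem graph_connected : graph.Connected :=
  graph.connected_of_iterate_eq (p := bfsParent) (r := 0) (k := 3) (by decide) (by decide)

def testVector : Fin 16 → ℤ :=
  ![25, 26, -26, 4, 25, -4, 8, 26, -25, -12, 9, 47, -26, -25, -6, -47]

theorem testVector_dotProduct_lapMatrix_mulVec :
    testVector ⬝ᵥ (graph.lapMatrix ℤ *ᵥ testVector) = 81457 := by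
  decide

theorem testVector_dotProduct_self : testVector ⬝ᵥ testVector = 9979 := by
  decide

theorem rayleigh_le_lapSpectralRadius : (81457 / 9979 : ℝ) ≤ lapSpectralRadius graph := by
  have h := graph.le_lapSpectralRadius_mul (Int.castRingHom ℝ ∘ testVector)
  rw [← graph.map_dotProduct_lapMatrix_mulVec, ← RingHom.map_dotProduct,
    testVector_dotProduct_lapMatrix_mulVec, testVector_dotProduct_self, map_ofNat, map_ofNat] at h
  exact (div_le_iff₀ (by norm_num)).mpr h

theorem neighbor_degree_bound : ∀ v : Fin 16,
    27 * ((∑ u ∈ graph.neighborFinset v, graph.degree u) *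
      (∑ u ∈ graph.neighborFinset v, graph.degree u + graph.degree v ^ 2)) ≤
        220 * graph.degree v ^ 3 := by
  decide

theorem iSup_sq_avgNeighborDeg_div_vertDeg_add_le :
    (⨆ v, avgNeighborDeg graph v ^ 2 / vertDeg graph v + avgNeighborDeg graph v) ≤ 220 / 27 :=
  ciSup_le fun v ↦ by
    exact_mod_cast graph.sq_avgNeighborDeg_div_vertDeg_add_le (by norm_num) v
      (neighbor_degree_bound v)

end Counterexample16

/-- There is a connected simple graph on 16 vertices with
`μ(G) > max_{v} ( m(v)^2 / d(v) + m(v) )`. -/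
theorem laplacian_upper_bound_fails_on_order_16 :
    ∃ G : SimpleGraph (Fin 16), G.Connected ∧
      (⨆ v : Fin 16, ((avgNeighborDeg G v) ^ 2 / (vertDeg G v : ℝ) + avgNeighborDeg G v))
        < lapSpectralRadius G :=
  ⟨Counterexample16.graph, Counterexample16.graph_connected,
    Counterexample16.iSup_sq_avgNeighborDeg_div_vertDeg_add_le.trans_lt
      ((by norm_num : (220 / 27 : ℝ) < 81457 / 9979).trans_le
        Counterexample16.rayleigh_le_lapSpectralRadius)⟩
end

section
/- There exists a connected simple graph G on 14 vertices whose maximum vertex degree Δ(G) satisfies 2 ≤ Δ(G) ≤ 5 and whose energy satisfies E(G) > 2·ν(G)·√Δ(G), where E(G) is the graph energy and ν(G) is the matching number of G. Since G has 14 vertices it is not isomorphic to any of the cycles C₃, C₅, C₇; hence this disproves the conjecture that every connected graph G not isomorphic to C₃, C₅, C₇ with Δ(G) ∈ {2, 3, 4, 5} satisfies E(G) ≤ 2·ν(G)·√Δ(G). -/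
open SimpleGraph Matrix

/-- The adjacency matrix of a simple graph over `ℝ` is Hermitian. -/
theorem adjMatrix_isHermitian {V : Type*} [Fintype V] [DecidableEq V]
    (G : SimpleGraph V) [DecidableRel G.Adj] : (G.adjMatrix ℝ).IsHermitian := by
  rw [Matrix.IsHermitian, Matrix.conjTranspose_eq_transpose_of_trivial]
  exact G.isSymm_adjMatrix

/-- The energy of a graph: the sum of the absolute values of the eigenvalues of
its adjacency matrix. -/
noncomputable def graphEnergy {V : Type*} [Fintype V] [DecidableEq V]
    (G : SimpleGraph V) : ℝ :=
  letI : DecidableRel G.Adj := Classical.decRel _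
  ∑ i, |(adjMatrix_isHermitian G).eigenvalues i|

/-- The matching number of a graph: the maximum number of edges in a matching. -/
noncomputable def matchingNumber {V : Type*} [Fintype V] (G : SimpleGraph V) : ℕ :=
  sSup {k | ∃ M : G.Subgraph, M.IsMatching ∧ M.edgeSet.ncard = k}

/-- The maximum vertex degree of a graph. -/
noncomputable def maxDeg {V : Type*} [Fintype V] (G : SimpleGraph V) : ℕ :=
  letI : DecidableRel G.Adj := Classical.decRel _
  G.maxDegree

/-!
The graph consists of two triangles hanging off a vertex of a small tree; it has `Δ = 3`,
and its edges split into five classes of pairwise intersecting edges, so `ν ≤ 5`.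
Its energy is about `17.4476`, just above `2 · 5 · √3 ≈ 17.3205`.

The energy is bounded below without computing eigenvalues: for any finite family of real
vectors `v j`, a Schur-test form of Bessel's inequality gives
`∑ j |⟪v j, A v j⟫| / ∑ k |⟪v j, v k⟫| ≤ ∑ i |λ i|`.
Feeding in five exact eigenvectors and integer roundings of the other seven makes the left
side an explicit rational number exceeding `17.33`.
-/

open Finset
open scoped RealInnerProductSpace

theorem sum_mul_mul_le_sum_sq_mul_sum_abs {ι : Type*} [Fintype ι] (g : ι → ι → ℝ)
    (hg : ∀ j k, g j k = g k j) (b : ι → ℝ) :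
    ∑ j, ∑ k, b j * b k * g j k ≤ ∑ j, b j ^ 2 * ∑ k, |g j k| := by
  have amgm : ∀ j k, b j * b k * g j k ≤ (b j ^ 2 * |g j k| + b k ^ 2 * |g k j|) / 2 := by
    intro j k
    rw [← hg j k]
    rcases abs_cases (g j k) with ⟨h, -⟩ | ⟨h, hneg⟩ <;> rw [h]
    · nlinarith [mul_nonneg (abs_nonneg (g j k)) (sq_nonneg (b j - b k))]
    · nlinarith [mul_nonneg (neg_nonneg.2 hneg.le) (sq_nonneg (b j + b k))]
  calc ∑ j, ∑ k, b j * b k * g j k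
      ≤ ∑ j, ∑ k, (b j ^ 2 * |g j k| + b k ^ 2 * |g k j|) / 2 :=
        sum_le_sum fun j _ => sum_le_sum fun k _ => amgm j k
    _ = ∑ j, b j ^ 2 * ∑ k, |g j k| := by
      have swap : ∑ j, ∑ k, b k ^ 2 * |g k j| = ∑ j, ∑ k, b j ^ 2 * |g j k| := sum_comm
      simp only [add_div, sum_add_distrib, ← sum_div, swap, mul_sum]
      ring

/-- Bessel's inequality for a family that need not be orthogonal: the Schur weight
`∑ k, |⟪v j, v k⟫|` takes the place of `‖v j‖ ^ 2`. -/
theorem sum_inner_sq_div_sum_abs_inner_le {E : Type*} [NormedAddCommGroup E]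
    [InnerProductSpace ℝ E] {ι : Type*} [Fintype ι] (v : ι → E) (x : E) :
    ∑ j, ⟪v j, x⟫ ^ 2 / ∑ k, |⟪v j, v k⟫| ≤ ‖x‖ ^ 2 := by
  set c : ι → ℝ := fun j => ∑ k, |⟪v j, v k⟫|
  set b : ι → ℝ := fun j => ⟪v j, x⟫ / c j
  set S := ∑ j, ⟪v j, x⟫ ^ 2 / c j
  set y := ∑ j, b j • v j
  have hyx : ⟪y, x⟫ = S := by
    simp only [y, sum_inner, real_inner_smul_left, b, S]
    exact sum_congr rfl fun j _ => by ring
  have hyy : ‖y‖ ^ 2 ≤ S := calc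
    ‖y‖ ^ 2 = ∑ j, ∑ k, b j * b k * ⟪v j, v k⟫ := by
      simp only [y, ← real_inner_self_eq_norm_sq, sum_inner, inner_sum, real_inner_smul_left,
        real_inner_smul_right]
      exact sum_congr rfl fun j _ => sum_congr rfl fun k _ => by rw [real_inner_comm]; ring
    _ ≤ ∑ j, b j ^ 2 * c j :=
      sum_mul_mul_le_sum_sq_mul_sum_abs _ (fun j k => real_inner_comm _ _) b
    _ = S := sum_congr rfl fun j _ => by
      by_cases hc : c j = 0
      · simp [b, hc]
      · simp only [b]; field_simp
  nlinarith [real_inner_le_norm y x, two_mul_le_add_sq ‖y‖ ‖x‖]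

section SchurRayleigh

variable {n ι : Type*} [Fintype n] [Fintype ι]

def schurRayleighSum {K : Type*} [Field K] [LinearOrder K] (A : Matrix n n K)
    (v : ι → n → K) : K :=
  ∑ j, |v j ⬝ᵥ A *ᵥ v j| / ∑ k, |v j ⬝ᵥ v k|

theorem schurRayleighSum_ratCast (A : Matrix n n ℚ) (v : ι → n → ℚ) :
    ((schurRayleighSum A v : ℚ) : ℝ) =
      schurRayleighSum (A.map (↑)) (fun j i => (v j i : ℝ)) := by
  simp only [schurRayleighSum, dotProduct, mulVec, map_apply]
  push_cast
  rfl

variable [DecidableEq n] {A : Matrix n n ℝ}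

theorem Matrix.IsHermitian.dotProduct_mulVec_self_eq_sum (hA : A.IsHermitian) (x : n → ℝ) :
    x ⬝ᵥ A *ᵥ x = ∑ i, hA.eigenvalues i * (x ⬝ᵥ hA.eigenvectorBasis i) ^ 2 := by
  have hAt : Aᵀ = A := by simpa [conjTranspose_eq_transpose_of_trivial] using hA.eq
  have adjoint : ∀ w, A *ᵥ x ⬝ᵥ w = x ⬝ᵥ A *ᵥ w := fun w => by
    rw [dotProduct_comm, dotProduct_mulVec, ← mulVec_transpose, hAt, dotProduct_comm]
  have parseval := hA.eigenvectorBasis.sum_inner_mul_inner (WithLp.toLp 2 x)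
    (WithLp.toLp 2 (A *ᵥ x))
  simp only [EuclideanSpace.inner_eq_star_dotProduct, star_trivial] at parseval
  rw [dotProduct_comm, ← parseval]
  refine sum_congr rfl fun i _ => ?_
  rw [adjoint, mulVec_eigenvectorBasis, dotProduct_smul, smul_eq_mul, dotProduct_comm x]
  ring

theorem Matrix.IsHermitian.schurRayleighSum_le (hA : A.IsHermitian) (v : ι → n → ℝ) :
    schurRayleighSum A v ≤ ∑ i, |hA.eigenvalues i| := by
  set β := hA.eigenvectorBasis
  set c : ι → ℝ := fun j => ∑ k, |v j ⬝ᵥ v k|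
  have bessel : ∀ i, ∑ j, (v j ⬝ᵥ β i) ^ 2 / c j ≤ 1 := fun i => by
    simpa [EuclideanSpace.inner_eq_star_dotProduct, β.orthonormal.1 i, c, dotProduct_comm]
      using sum_inner_sq_div_sum_abs_inner_le (fun j => WithLp.toLp 2 (v j)) (β i)
  calc schurRayleighSum A v
      = ∑ j, |v j ⬝ᵥ A *ᵥ v j| / c j := rfl
    _ ≤ ∑ j, (∑ i, |hA.eigenvalues i| * (v j ⬝ᵥ β i) ^ 2) / c j := by
        gcongr with j
        rw [hA.dotProduct_mulVec_self_eq_sum]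
        refine (abs_sum_le_sum_abs _ _).trans_eq (sum_congr rfl fun i _ => ?_)
        rw [abs_mul, abs_sq]
    _ = ∑ i, |hA.eigenvalues i| * ∑ j, (v j ⬝ᵥ β i) ^ 2 / c j := by
        simp only [sum_div, mul_sum, mul_div_assoc]
        exact sum_comm
    _ ≤ ∑ i, |hA.eigenvalues i| := by
        refine sum_le_sum fun i _ => ?_
        simpa using mul_le_mul_of_nonneg_left (bessel i) (abs_nonneg (hA.eigenvalues i))

end SchurRayleigh

namespace SimpleGraph

variable {V : Type*}

theorem adjMatrix_map [DecidableEq V] (G : SimpleGraph V) [DecidableRel G.Adj]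
    {α β : Type*} [Zero α] [One α] [Zero β] [One β] {f : α → β}
    (h0 : f 0 = 0) (h1 : f 1 = 1) :
    (G.adjMatrix α).map f = G.adjMatrix β := by
  ext i j
  by_cases h : G.Adj i j <;> simp [h, h0, h1]

theorem schurRayleighSum_le_graphEnergy [Fintype V] [DecidableEq V] {ι : Type*} [Fintype ι]
    (G : SimpleGraph V) [DecidableRel G.Adj] (v : ι → V → ℝ) :
    schurRayleighSum (G.adjMatrix ℝ) v ≤ graphEnergy G := by
  obtain rfl : ‹DecidableRel G.Adj› = Classical.decRel _ := Subsingleton.elim _ _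
  exact (@adjMatrix_isHermitian _ _ _ G (Classical.decRel _)).schurRayleighSum_le v

theorem maxDeg_eq_maxDegree [Fintype V] (G : SimpleGraph V) [DecidableRel G.Adj] :
    maxDeg G = G.maxDegree := by
  unfold maxDeg
  congr!

theorem connected_of_adj_parent {G : SimpleGraph V} (root : V) (parent : V → V)
    (depth : V → ℕ)
    (h : ∀ v, v ≠ root → G.Adj v (parent v) ∧ depth (parent v) < depth v) :
    G.Connected := by
  refine (connected_iff_exists_forall_reachable G).2 ⟨root, fun v => ?_⟩
  induction v using (measure depth).wf.induction with
  | _ v ih =>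
    by_cases hv : v = root
    · exact hv ▸ Reachable.refl _
    obtain ⟨hadj, hlt⟩ := h v hv
    exact (ih _ hlt).trans hadj.symm.reachable

theorem Subgraph.IsMatching.eq_of_mem_of_mem {G : SimpleGraph V} {M : G.Subgraph}
    (hM : M.IsMatching) {e e' : Sym2 V} (he : e ∈ M.edgeSet) (he' : e' ∈ M.edgeSet) {v : V}
    (hv : v ∈ e) (hv' : v ∈ e') : e = e' := by
  obtain ⟨w, rfl⟩ := Sym2.mem_iff_exists.mp hv
  obtain ⟨w', rfl⟩ := Sym2.mem_iff_exists.mp hv'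
  rw [Subgraph.mem_edgeSet] at he he'
  rw [hM.eq_of_adj_left he he']

theorem Subgraph.IsMatching.ncard_edgeSet_le {α : Type*} [Fintype α] {G : SimpleGraph V}
    {M : G.Subgraph} (hM : M.IsMatching) (f : Sym2 V → α)
    (hf : ∀ e ∈ G.edgeSet, ∀ e' ∈ G.edgeSet, f e = f e' → ∃ v, v ∈ e ∧ v ∈ e') :
    M.edgeSet.ncard ≤ Fintype.card α := by
  have hinj : Set.InjOn f M.edgeSet := fun e he e' he' hee' => by
    obtain ⟨v, hv, hv'⟩ := hf e (M.edgeSet_subset he) e' (M.edgeSet_subset he') hee'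
    exact hM.eq_of_mem_of_mem he he' hv hv'
  rw [← hinj.ncard_image, ← Nat.card_eq_fintype_card]
  exact Set.ncard_le_card _

theorem matchingNumber_le [Fintype V] {α : Type*} [Fintype α] {G : SimpleGraph V}
    (f : Sym2 V → α)
    (hf : ∀ e ∈ G.edgeSet, ∀ e' ∈ G.edgeSet, f e = f e' → ∃ v, v ∈ e ∧ v ∈ e') :
    matchingNumber G ≤ Fintype.card α := by
  refine csSup_le' ?_
  rintro k ⟨M, hM, rfl⟩
  exact hM.ncard_edgeSet_le f hf

end SimpleGraph

def counterexampleEdges : Finset (Sym2 (Fin 14)) :=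
  {s(0, 2), s(0, 12), s(0, 13), s(1, 5), s(1, 7), s(1, 12), s(2, 10), s(3, 4), s(3, 5),
    s(4, 5), s(6, 7), s(6, 8), s(7, 8), s(9, 10), s(10, 11)}

def counterexample : SimpleGraph (Fin 14) := fromEdgeSet counterexampleEdges

instance : DecidableRel counterexample.Adj :=
  inferInstanceAs (DecidableRel (fromEdgeSet (counterexampleEdges : Set (Sym2 (Fin 14)))).Adj)

theorem counterexample_connected : counterexample.Connected :=
  connected_of_adj_parent 0 ![0, 12, 0, 5, 5, 1, 7, 1, 7, 10, 2, 10, 0, 0]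
    ![0, 2, 1, 4, 4, 3, 4, 3, 4, 3, 2, 3, 1, 1] (by decide)

theorem counterexample_maxDegree : counterexample.maxDegree = 3 := by decide

/-- The edges through `0`, through `1`, through `10`, and the edges of the triangles
`{3, 4, 5}` and `{6, 7, 8}`. -/
def counterexampleEdgeClass (e : Sym2 (Fin 14)) : Fin 5 :=
  if 0 ∈ e then 0 else if 1 ∈ e then 1 else if 10 ∈ e then 2
  else if 3 ∈ e ∨ 4 ∈ e then 3 else 4

theorem matchingNumber_counterexample_le : matchingNumber counterexample ≤ 5 := by
  refine (matchingNumber_le counterexampleEdgeClass fun e he e' he' => ?_).trans_eq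
    (Fintype.card_fin 5)
  rw [counterexample, edgeSet_fromEdgeSet] at he he'
  revert e e'
  decide +kernel

/-- Rows `0`–`4` are exact eigenvectors for the eigenvalues `-1, -1, -1, 2, 2` (row `4` scaled
to the size of the others, which keeps its Schur weight small); rows `5`–`11` are integer
roundings of eigenvectors for the seven irrational eigenvalues. -/
def approxEigenvectors : Fin 12 → Fin 14 → ℚ :=
  ![![0, 0, 0, 1, -1, 0, 0, 0, 0, 0, 0, 0, 0, 0],
    ![0, 0, 0, 0, 0, 0, 1, 0, -1, 0, 0, 0, 0, 0],
    ![0, 0, 0, 1, 1, -2, -1, 2, -1, 0, 0, 0, 0, 0],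
    ![0, 0, 0, 1, 1, 1, -1, -1, -1, 0, 0, 0, 0, 0],
    ![144, 0, 144, -36, -36, -36, -36, -36, -36, 72, 144, 72, 72, 72],
    ![133, 150, -97, 31, 31, -97, 31, -97, 31, -36, 78, -36, -131, -61],
    ![-76, 112, 121, 33, 33, -95, 33, -95, 33, 80, -150, 80, -19, 40],
    ![57, 150, 31, 98, 98, 141, 98, 141, 98, 8, 19, 8, 85, 23],
    ![77, -150, 56, 69, 69, -14, 69, -14, 69, -41, -33, -41, -91, 97],
    ![-121, -53, 20, 41, 41, 20, 41, 20, 41, 101, 150, 101, -117, -82],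
    ![-150, 35, 12, 28, 28, -66, 28, -66, 28, -98, 134, -98, 84, 109],
    ![30, -77, -63, 48, 48, -63, 48, -63, 48, 33, -10, 33, 150, -96]]

theorem lt_schurRayleighSum_approxEigenvectors :
    (1733 / 100 : ℚ) < schurRayleighSum (counterexample.adjMatrix ℚ) approxEigenvectors := by
  decide +kernel

theorem lt_graphEnergy_counterexample : (1733 / 100 : ℝ) < graphEnergy counterexample := calc
  (1733 / 100 : ℝ) = ((1733 / 100 : ℚ) : ℝ) := by norm_num
  _ < ((schurRayleighSum (counterexample.adjMatrix ℚ) approxEigenvectors : ℚ) : ℝ) :=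
    Rat.cast_lt.2 lt_schurRayleighSum_approxEigenvectors
  _ = schurRayleighSum (counterexample.adjMatrix ℝ)
      (fun j i => (approxEigenvectors j i : ℝ)) := by
    rw [schurRayleighSum_ratCast, adjMatrix_map _ Rat.cast_zero Rat.cast_one]
  _ ≤ graphEnergy counterexample := schurRayleighSum_le_graphEnergy _ _

/-- There is a connected simple graph on 14 vertices with `2 ≤ Δ(G) ≤ 5` and
`E(G) > 2 ν(G) √(Δ(G))`. -/
theorem energy_matching_conjecture_fails_on_order_14 :
    ∃ G : SimpleGraph (Fin 14), G.Connected ∧ 2 ≤ maxDeg G ∧ maxDeg G ≤ 5 ∧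
      2 * (matchingNumber G : ℝ) * Real.sqrt (maxDeg G) < graphEnergy G := by
  have hΔ : maxDeg counterexample = 3 := by
    rw [maxDeg_eq_maxDegree, counterexample_maxDegree]
  refine ⟨counterexample, counterexample_connected, by omega, by omega, ?_⟩
  have hν : (matchingNumber counterexample : ℝ) ≤ 5 := by
    exact_mod_cast matchingNumber_counterexample_le
  have hsqrt : Real.sqrt 3 < 1733 / 1000 := by
    rw [Real.sqrt_lt' (by norm_num)]
    norm_num
  calc 2 * (matchingNumber counterexample : ℝ) * Real.sqrt (maxDeg counterexample)
      ≤ 2 * 5 * Real.sqrt 3 := by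
        rw [hΔ, Nat.cast_ofNat]
        gcongr
    _ < 1733 / 100 := by linarith
    _ < graphEnergy counterexample := lt_graphEnergy_counterexample
end

section
/- There exists a nontrivial connected simple graph G such that μ(G) > max over all vertices v of G of ( m(v)²/d(v) + m(v) ); that is, the conjecture asserting that every nontrivial connected simple graph G satisfies μ(G) ≤ max_{v∈V(G)} ( m(v)²/d(v) + m(v) ) is false. -/
open SimpleGraph Matrix

/-! ### Auxiliary development: counterexample graph -/

private lemma rayleigh_le_iSup {n : Type*} [Fintype n] [DecidableEq n] [Nonempty n]
    {A : Matrix n n ℝ} (hA : A.IsHermitian) {x : n → ℝ} {c : ℝ}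
    (hx : A *ᵥ x = c • x) (hxx : 0 < x ⬝ᵥ x) :
    c ≤ ⨆ i, hA.eigenvalues i := by
  classical
  set U : Matrix n n ℝ := (hA.eigenvectorUnitary : Matrix n n ℝ) with hU
  have hstar : star U = Uᵀ := by
    rw [Matrix.star_eq_conjTranspose, Matrix.conjTranspose_eq_transpose_of_trivial]
  set y : n → ℝ := star U *ᵥ x with hy
  have hxvU : x ᵥ* U = y := by rw [hy, hstar, Matrix.mulVec_transpose]
  have hUy : U *ᵥ y = x := by
    rw [hy, Matrix.mulVec_mulVec, (Matrix.mem_unitaryGroup_iff).mp hA.eigenvectorUnitary.2,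
      Matrix.one_mulVec]
  have hyy : y ⬝ᵥ y = x ⬝ᵥ x := by
    calc y ⬝ᵥ y = (x ᵥ* U) ⬝ᵥ y := by rw [hxvU]
      _ = x ⬝ᵥ (U *ᵥ y) := (Matrix.dotProduct_mulVec x U y).symm
      _ = x ⬝ᵥ x := by rw [hUy]
  have hspec : A = U * Matrix.diagonal hA.eigenvalues * star U := by
    have := hA.spectral_theorem
    simpa [hU, RCLike.ofReal_real_eq_id] using this
  have e1 : A *ᵥ x = U *ᵥ (Matrix.diagonal hA.eigenvalues *ᵥ y) := by
    conv_lhs => rw [hspec, ← Matrix.mulVec_mulVec, ← Matrix.mulVec_mulVec]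

  have key : c * (x ⬝ᵥ x) = ∑ i, hA.eigenvalues i * (y i * y i) := by
    have h1 : x ⬝ᵥ (A *ᵥ x) = c * (x ⬝ᵥ x) := by
      rw [hx, dotProduct_smul, smul_eq_mul]
    have h2 : x ⬝ᵥ (A *ᵥ x) = ∑ i, hA.eigenvalues i * (y i * y i) := by
      rw [e1, Matrix.dotProduct_mulVec, hxvU]
      simp only [dotProduct, Matrix.mulVec_diagonal]
      exact Finset.sum_congr rfl fun i _ => by ring
    rw [← h1, h2]
  have hb : BddAbove (Set.range hA.eigenvalues) := (Set.finite_range _).bddAbove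
  have hle : ∑ i, hA.eigenvalues i * (y i * y i)
      ≤ (⨆ i, hA.eigenvalues i) * (x ⬝ᵥ x) := by
    rw [← hyy]
    have h3 : y ⬝ᵥ y = ∑ i, y i * y i := rfl
    rw [h3, Finset.mul_sum]
    exact Finset.sum_le_sum fun i _ =>
      mul_le_mul_of_nonneg_right (le_ciSup hb i) (mul_self_nonneg _)
  have := key ▸ hle
  exact le_of_mul_le_mul_right this hxx

/-- The relation generating the counterexample graph: vertex `0` is a hub,
vertices `1,…,18` form a circulant 5-regular graph. -/
private def cRel (i j : Fin 19) : Prop :=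
  i = 0 ∨ (i.val + 18 - j.val) % 18 = 1 ∨ (i.val + 18 - j.val) % 18 = 2 ∨
    (i.val + 18 - j.val) % 18 = 9

private instance : DecidableRel cRel := fun i j => by
  unfold cRel; infer_instance

/-- The counterexample: the join of a single vertex with a 5-regular graph on 18 vertices. -/
private def cGraph : SimpleGraph (Fin 19) := SimpleGraph.fromRel cRel

private instance cGraphDec : DecidableRel cGraph.Adj := fun i j =>
  inferInstanceAs (Decidable (i ≠ j ∧ (cRel i j ∨ cRel j i)))

private lemma cGraph_degree : ∀ v : Fin 19, cGraph.degree v = if v = 0 then 18 else 6 := by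
  decide

private lemma cGraph_sumdeg :
    ∀ v : Fin 19, (∑ u ∈ cGraph.neighborFinset v, cGraph.degree u)
      = if v = 0 then 108 else 48 := by
  decide

private lemma cGraph_adj_zero : ∀ v : Fin 19, v ≠ 0 → cGraph.Adj v 0 := by decide

private lemma cGraph_connected : cGraph.Connected := by
  rw [SimpleGraph.connected_iff]
  refine ⟨fun u v => ?_, ⟨0⟩⟩
  by_cases hu : u = 0
  · by_cases hv : v = 0
    · subst hu; subst hv; exact SimpleGraph.Reachable.refl 0
    · subst hu; exact ((cGraph_adj_zero v hv).symm).reachable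
  · by_cases hv : v = 0
    · subst hv; exact (cGraph_adj_zero u hu).reachable
    · exact ((cGraph_adj_zero u hu).reachable).trans ((cGraph_adj_zero v hv).symm).reachable

/-- There is a nontrivial (at least two vertices) connected simple graph with
`μ(G) > max_{v} ( m(v)^2 / d(v) + m(v) )`;  that is, the conjectured upper bound
`μ(G) ≤ max_{v ∈ V(G)} ( m(v)^2 / d(v) + m(v) )` is false. -/
theorem laplacian_upper_bound_conjecture_false :
    ∃ (V : Type) (_ : Fintype V) (_ : DecidableEq V) (G : SimpleGraph V),
      2 ≤ Fintype.card V ∧ G.Connected ∧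
      (⨆ v : V, ((avgNeighborDeg G v) ^ 2 / (vertDeg G v : ℝ) + avgNeighborDeg G v))
        < lapSpectralRadius G := by
  classical
  refine ⟨Fin 19, inferInstance, inferInstance, cGraph, by norm_num, cGraph_connected, ?_⟩
  have hinst : ∀ (i1 i2 : DecidableRel cGraph.Adj), i1 = i2 := fun i1 i2 => by
    funext a b; exact Subsingleton.elim _ _
  have hinst2 : Classical.decRel cGraph.Adj = cGraphDec := hinst _ _
  have hdeg : ∀ v : Fin 19, vertDeg cGraph v = if v = 0 then 18 else 6 := by
    intro v
    unfold vertDeg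
    rw [hinst (Classical.decRel _) cGraphDec]
    exact cGraph_degree v
  have havg : ∀ v : Fin 19, avgNeighborDeg cGraph v = if v = 0 then 6 else 8 := by
    intro v
    unfold avgNeighborDeg
    rw [hinst (Classical.decRel _) cGraphDec]
    rw [show (∑ u ∈ cGraph.neighborFinset v, (cGraph.degree u : ℝ))
        = ((∑ u ∈ cGraph.neighborFinset v, cGraph.degree u : ℕ) : ℝ) by push_cast; rfl]
    rw [cGraph_sumdeg v, cGraph_degree v]
    by_cases hv : v = 0
    · simp [hv]; norm_num
    · simp [hv]; norm_num
  have hsup : (⨆ v : Fin 19, ((avgNeighborDeg cGraph v) ^ 2 / (vertDeg cGraph v : ℝ)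
      + avgNeighborDeg cGraph v)) ≤ 56 / 3 := by
    refine ciSup_le fun v => ?_
    rw [havg v, hdeg v]
    by_cases hv : v = 0
    · simp [hv]; norm_num
    · simp [hv]; norm_num
  have hrad : (19 : ℝ) ≤ lapSpectralRadius cGraph := by
    unfold lapSpectralRadius
    set x : Fin 19 → ℝ := fun i => if i = 0 then 18 else -1 with hxdef
    have hx : (cGraph.lapMatrix ℝ) *ᵥ x = (19 : ℝ) • x := by
      funext v
      rw [SimpleGraph.lapMatrix_mulVec_apply]
      have hxu : ∀ u : Fin 19, x u = (if u = 0 then (19 : ℝ) else 0) + (-1) := by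
        intro u
        by_cases hu : u = 0
        · simp [hxdef, hu]; norm_num
        · simp [hxdef, hu]
      have hnsum : (∑ u ∈ cGraph.neighborFinset v, x u)
          = (if (0 : Fin 19) ∈ cGraph.neighborFinset v then (19 : ℝ) else 0)
            - (cGraph.neighborFinset v).card := by
        rw [Finset.sum_congr rfl fun u _ => hxu u, Finset.sum_add_distrib,
          Finset.sum_ite_eq' (cGraph.neighborFinset v) 0 (fun _ => (19 : ℝ))]
        simp [sub_eq_add_neg]
      rw [hnsum]
      have hdcast : (cGraph.degree v : ℝ) = if v = 0 then 18 else 6 := by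
        rw [cGraph_degree v]; by_cases hv : v = 0 <;> simp [hv]
      have hcard : ((cGraph.neighborFinset v).card : ℝ) = if v = 0 then 18 else 6 := by
        rw [show (cGraph.neighborFinset v).card = cGraph.degree v from rfl]
        exact hdcast
      by_cases hv : v = 0
      · subst hv
        have h0 : (0 : Fin 19) ∉ cGraph.neighborFinset (0 : Fin 19) := by
          simp [SimpleGraph.mem_neighborFinset]
        rw [if_neg h0, hdcast, hcard]
        simp [hxdef]
        norm_num
      · have h0 : (0 : Fin 19) ∈ cGraph.neighborFinset v := by
          rw [SimpleGraph.mem_neighborFinset]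
          exact cGraph_adj_zero v hv
        rw [if_pos h0, hdcast, hcard, if_neg hv]
        simp only [hxdef]
        rw [if_neg hv]
        simp only [Pi.smul_apply, smul_eq_mul]
        rw [if_neg hv]
        norm_num
    have hxx : (0 : ℝ) < x ⬝ᵥ x := by
      have h : x ⬝ᵥ x = ∑ i, x i * x i := rfl
      rw [h]
      refine Finset.sum_pos' (fun i _ => mul_self_nonneg _) ⟨0, Finset.mem_univ _, ?_⟩
      simp [hxdef]
    have hMeq : (letI : DecidableRel cGraph.Adj := Classical.decRel _
        cGraph.lapMatrix ℝ) = cGraph.lapMatrix ℝ := by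
      show @SimpleGraph.lapMatrix (Fin 19) ℝ _ cGraph (Classical.decRel _) _ _
        = @SimpleGraph.lapMatrix (Fin 19) ℝ _ cGraph cGraphDec _ _
      rw [hinst2]
    have hx' : (letI : DecidableRel cGraph.Adj := Classical.decRel _
        cGraph.lapMatrix ℝ) *ᵥ x = (19 : ℝ) • x := by
      rw [hMeq]; exact hx
    exact rayleigh_le_iSup _ hx' hxx
  calc (⨆ v : Fin 19, ((avgNeighborDeg cGraph v) ^ 2 / (vertDeg cGraph v : ℝ)
      + avgNeighborDeg cGraph v)) ≤ 56 / 3 := hsup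
    _ < 19 := by norm_num
    _ ≤ lapSpectralRadius cGraph := hrad
end
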